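/- For every positive integer n divisible by 66, there exists a K4-free simple graph H' on n vertices that contains a triangle, has exactly n²/4 edges, and satisfies f(H') = 2n²/33 − 3n/11. -/

import Mathlib

open SimpleGraph

/-- `{u, v}` is a `K₄`-saturating edge of `G`: `u ≠ v`, `u` and `v` are nonadjacent, and
adding the edge `uv` to `G` creates a copy of `K₄`. -/
def SatEdge {V : Type*} (G : SimpleGraph V) (u v : V) : Prop :=
  u ≠ v ∧ ¬ G.Adj u v ∧ ¬ (G ⊔ SimpleGraph.fromEdgeSet {s(u, v)}).CliqueFree 4

/-- `f G`: the number of `K₄`-saturating edges of `G`. -/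
noncomputable def satCount {V : Type*} (G : SimpleGraph V) : ℕ :=
  {e : Sym2 V | ∃ u v, e = s(u, v) ∧ SatEdge G u v}.ncard

/-!
Blow up the 5-cycle `0 1 2 3 4` with the chord `02` (the paper's `v₁ … v₅` with chord `v₁v₃`),
replacing vertex `i` by an independent set `Vᵢ` of size `16m, 4m, 16m, 15m, 15m` for `n = 66m`.
The pattern is 3-colourable, hence so is the blow-up, which is therefore `K₄`-free; it contains the
triangle `012`. In a `K₄`-free graph a non-edge `uv` is saturating iff the common neighbourhood of
`u` and `v` spans an edge. In the blow-up, the common neighbourhood of two non-adjacent vertices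
spans an edge only when both lie in the same part `V₀`, `V₁` or `V₂`, so
`f = 2·C(16m, 2) + C(4m, 2) = 264m² - 18m`, while the edge count is `1089m² = n² / 4`.
-/

open Finset Function

variable {V ι : Type*}

lemma sum_comp_eq_sum_card_fiber_nsmul [Fintype V] [Fintype ι] [DecidableEq ι] {M : Type*}
    [AddCommMonoid M] (p : V → ι) (f : ι → M) :
    ∑ v, f (p v) = ∑ i, #{v | p v = i} • f i := by
  rw [← sum_fiberwise' univ p f]
  simp only [sum_const]

lemma exists_card_fiber_eq [Fintype ι] [DecidableEq ι] (s : ι → ℕ) {n : ℕ} (hn : ∑ i, s i = n) :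
    ∃ p : Fin n → ι, ∀ i, #{v | p v = i} = s i := by
  let e : Fin n ≃ Σ i, Fin (s i) := Fintype.equivOfCardEq (by simp [hn])
  refine ⟨fun v => (e v).1, fun i => ?_⟩
  rw [← Fintype.card_subtype, ← Fintype.card_fin (s i)]
  exact Fintype.card_congr ((e.subtypeEquiv fun _ => Iff.rfl).trans (Equiv.sigmaSubtype i))

lemma satEdge_comm {G : SimpleGraph V} {u v : V} : SatEdge G u v ↔ SatEdge G v u := by
  unfold SatEdge
  rw [Sym2.eq_swap, G.adj_comm]
  exact and_congr_left' ne_comm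

def satGraph (G : SimpleGraph V) : SimpleGraph V where
  Adj := SatEdge G
  symm := ⟨fun _ _ => satEdge_comm.1⟩
  loopless := ⟨fun _ h => h.1 rfl⟩

lemma satCount_eq_ncard_edgeSet (G : SimpleGraph V) :
    satCount G = (satGraph G).edgeSet.ncard := by
  unfold satCount
  congr 1
  ext e
  induction e using Sym2.ind with
  | _ a b =>
    rw [Set.mem_ofPred_eq, mem_edgeSet]
    refine ⟨?_, fun h => ⟨a, b, rfl, h⟩⟩
    rintro ⟨u, v, huv, h⟩
    rcases Sym2.eq_iff.1 huv with ⟨rfl, rfl⟩ | ⟨rfl, rfl⟩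
    exacts [h, satEdge_comm.1 h]

namespace SimpleGraph

lemma not_cliqueFree_four_sup_edge_iff {G : SimpleGraph V} (hG : G.CliqueFree 4) {u v : V}
    (huv : u ≠ v) : ¬(G ⊔ edge u v).CliqueFree 4 ↔
      ∃ x ∈ G.commonNeighbors u v, ∃ y ∈ G.commonNeighbors u v, G.Adj x y := by
  classical
  constructor
  · intro h
    obtain ⟨t, ht⟩ := not_forall_not.1 h
    have hu := hG.mem_of_sup_edge_isNClique ht
    have hv := hG.mem_of_sup_edge_isNClique (edge_comm .. ▸ ht)
    have htu := ht.erase_of_sup_edge_of_mem hu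
    have htv := (edge_comm .. ▸ ht).erase_of_sup_edge_of_mem hv
    have hvtu : v ∈ t.erase u := mem_erase.2 ⟨huv.symm, hv⟩
    obtain ⟨x, y, hxy, hxyt⟩ := card_eq_two.1 <| by
      rw [card_erase_of_mem hvtu, htu.card_eq]
    have mem {z} (hz : z ∈ ({x, y} : Finset V)) : z ∈ t.erase u ∧ z ∈ t.erase v ∧ z ≠ v := by
      rw [← hxyt] at hz
      obtain ⟨hzv, hzu⟩ := mem_erase.1 hz
      exact ⟨hzu, mem_erase.2 ⟨hzv, (mem_erase.1 hzu).2⟩, hzv⟩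
    have common {z} (hz : z ∈ ({x, y} : Finset V)) : z ∈ G.commonNeighbors u v := by
      obtain ⟨hzu, hzv, hzne⟩ := mem hz
      exact ⟨htv.isClique (mem_erase.2 ⟨huv, hu⟩) hzv (mem_erase.1 hzu).1.symm,
        htu.isClique hvtu hzu hzne.symm⟩
    exact ⟨x, common (by simp), y, common (by simp),
      htu.isClique (mem (z := x) (by simp)).1 (mem (z := y) (by simp)).1 hxy⟩
  · rintro ⟨x, hx, y, hy, hxy⟩ hcf
    rw [mem_commonNeighbors] at hx hy
    refine hcf {u, v, x, y} <|
      ((is3Clique_triple_iff.2 ⟨hx.2, hy.2, hxy⟩).mono le_sup_left).insert ?_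
    simp [edge_adj, huv, hx.1, hy.1]

lemma Colorable.comap {H : SimpleGraph ι} {n : ℕ} (h : H.Colorable n) (p : V → ι) :
    (H.comap p).Colorable n :=
  .of_hom ⟨p, id⟩ h

lemma exists_isNClique_comap {H : SimpleGraph ι} {p : V → ι} (hp : Surjective p) {n : ℕ}
    {t : Finset ι} (ht : H.IsNClique n t) : ∃ s, (H.comap p).IsNClique n s := by
  let f : ι ↪ V := ⟨surjInv hp, injective_surjInv hp⟩
  refine ⟨t.map f, ht.map.mono ?_⟩
  rw [map_le_iff_le_comap, comap_comap, (show p ∘ f = id from funext (surjInv_eq hp)), comap_id]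

section Fintype

variable [Fintype V] [Fintype ι] [DecidableEq ι]

lemma degree_comap (H : SimpleGraph ι) [DecidableRel H.Adj] (p : V → ι) (v : V) :
    (H.comap p).degree v = ∑ i with H.Adj (p v) i, #{w | p w = i} := by
  rw [← card_neighborFinset_eq_degree, neighborFinset_eq_filter, card_filter, sum_filter]
  simp only [comap_adj]
  rw [sum_comp_eq_sum_card_fiber_nsmul p fun i => if H.Adj (p v) i then 1 else 0]
  simp only [smul_eq_mul, mul_ite, mul_one, mul_zero]

lemma two_mul_card_edgeFinset_comap [DecidableEq V] (H : SimpleGraph ι) [DecidableRel H.Adj]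
    (p : V → ι) :
    2 * #(H.comap p).edgeFinset = ∑ i, #{v | p v = i} * ∑ j with H.Adj i j, #{w | p w = j} := by
  rw [← sum_degrees_eq_twice_card_edges]
  simp only [degree_comap]
  exact sum_comp_eq_sum_card_fiber_nsmul p fun i => ∑ j with H.Adj i j, #{w | p w = j}

end Fintype

section FiberCliques

variable (p : V → ι) (S : Finset ι)

def fiberCliques : SimpleGraph V where
  Adj u v := u ≠ v ∧ p u = p v ∧ p u ∈ S
  symm := ⟨fun _ _ ⟨h, hp, hS⟩ => ⟨h.symm, hp.symm, hp ▸ hS⟩⟩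
  loopless := ⟨fun _ h => h.1 rfl⟩

@[simp]
lemma fiberCliques_adj {u v : V} : (fiberCliques p S).Adj u v ↔ u ≠ v ∧ p u = p v ∧ p u ∈ S :=
  Iff.rfl

variable [Fintype V] [DecidableEq V] [DecidableEq ι]

instance : DecidableRel (fiberCliques p S).Adj := fun _ _ =>
  inferInstanceAs (Decidable (_ ∧ _ ∧ _))

lemma degree_fiberCliques (v : V) :
    (fiberCliques p S).degree v = if p v ∈ S then #{w | p w = p v} - 1 else 0 := by
  rw [← card_neighborFinset_eq_degree]
  split_ifs with hv
  · rw [← card_erase_of_mem (s := {w | p w = p v}) (a := v) (by simp)]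
    congr 1
    ext w
    simp [hv, eq_comm, and_comm]
  · rw [card_eq_zero, eq_empty_iff_forall_notMem]
    exact fun w hw => hv ((mem_neighborFinset _ _ _).1 hw).2.2

lemma card_edgeFinset_fiberCliques [Fintype ι] :
    #(fiberCliques p S).edgeFinset = ∑ i ∈ S, (#{v | p v = i}).choose 2 := by
  apply Nat.eq_of_mul_eq_mul_left two_pos
  rw [← sum_degrees_eq_twice_card_edges, mul_sum]
  simp only [degree_fiberCliques]
  rw [sum_comp_eq_sum_card_fiber_nsmul p fun i => if i ∈ S then #{w | p w = i} - 1 else 0]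
  simp only [smul_eq_mul, mul_ite, mul_zero, ← sum_filter, filter_mem_eq_inter, univ_inter]
  refine sum_congr rfl fun i _ => ?_
  rw [Nat.choose_two_right, Nat.mul_div_cancel' (Nat.even_mul_pred_self _).two_dvd]

end FiberCliques

end SimpleGraph

lemma satEdge_iff_of_cliqueFree {G : SimpleGraph V} (hG : G.CliqueFree 4) {u v : V} :
    SatEdge G u v ↔ u ≠ v ∧ ¬G.Adj u v ∧
      ∃ x ∈ G.commonNeighbors u v, ∃ y ∈ G.commonNeighbors u v, G.Adj x y :=
  and_congr_right fun huv => and_congr_right fun _ => not_cliqueFree_four_sup_edge_iff hG huv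

lemma satEdge_comap_iff {H : SimpleGraph ι} {p : V → ι} (hp : Surjective p)
    (hG : (H.comap p).CliqueFree 4) {u v : V} :
    SatEdge (H.comap p) u v ↔ u ≠ v ∧ ¬H.Adj (p u) (p v) ∧
      ∃ i ∈ H.commonNeighbors (p u) (p v), ∃ j ∈ H.commonNeighbors (p u) (p v), H.Adj i j := by
  rw [satEdge_iff_of_cliqueFree hG]
  simp only [mem_commonNeighbors, comap_adj, hp.exists]

def pentagonWithChord : SimpleGraph (Fin 5) :=
  fromRel fun i j => j = i + 1 ∨ (i = 0 ∧ j = 2)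

instance : DecidableRel pentagonWithChord.Adj := fun i j =>
  inferInstanceAs (Decidable (i ≠ j ∧ _))

lemma pentagonWithChord_colorable : pentagonWithChord.Colorable 3 :=
  ⟨.mk ![0, 1, 2, 0, 1] (by decide)⟩

lemma pentagonWithChord_isNClique : pentagonWithChord.IsNClique 3 {0, 1, 2} := by
  rw [isNClique_iff, isClique_iff]
  decide

lemma pentagonWithChord_saturating_iff (a b : Fin 5) :
    (¬pentagonWithChord.Adj a b ∧ ∃ i ∈ pentagonWithChord.commonNeighbors a b,
      ∃ j ∈ pentagonWithChord.commonNeighbors a b, pentagonWithChord.Adj i j) ↔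
      a = b ∧ a ∈ ({0, 1, 2} : Finset (Fin 5)) := by
  simp only [mem_commonNeighbors]
  revert a b
  decide

lemma sum_mul_sum_adj_pentagonWithChord (s : Fin 5 → ℕ) :
    ∑ i, s i * ∑ j with pentagonWithChord.Adj i j, s j =
      2 * (s 0 * s 1 + s 1 * s 2 + s 2 * s 3 + s 3 * s 4 + s 4 * s 0 + s 0 * s 2) := by
  simp +decide only [sum_filter, Fin.sum_univ_five, ↓reduceIte, zero_add, add_zero]
  ring

lemma satGraph_comap_pentagonWithChord {p : V → Fin 5} (hp : Surjective p) :
    satGraph (pentagonWithChord.comap p) = fiberCliques p {0, 1, 2} := by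
  ext u v
  have hK4 := (pentagonWithChord_colorable.comap p).cliqueFree (by norm_num : 3 < 4)
  change SatEdge _ u v ↔ _
  rw [satEdge_comap_iff hp hK4, pentagonWithChord_saturating_iff, fiberCliques_adj]

theorem stmt4 (n : ℕ) (hn : 0 < n) (h66 : 66 ∣ n) :
    ∃ H' : SimpleGraph (Fin n), H'.CliqueFree 4 ∧
      (∃ t : Finset (Fin n), H'.IsNClique 3 t) ∧
      H'.edgeSet.ncard = n ^ 2 / 4 ∧
      (satCount H' : ℝ) = 2 * (n : ℝ) ^ 2 / 33 - 3 * n / 11 := by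
  obtain ⟨m, rfl⟩ := h66
  obtain ⟨p, hp⟩ := exists_card_fiber_eq (n := 66 * m)
    (![16 * m, 4 * m, 16 * m, 15 * m, 15 * m] : Fin 5 → ℕ) (by simp [Fin.sum_univ_five]; ring)
  have hsurj : Surjective p := fun i => by
    have : 0 < #{v | p v = i} := by rw [hp]; fin_cases i <;> simp <;> omega
    obtain ⟨v, hv⟩ := card_pos.1 this
    exact ⟨v, (mem_filter.1 hv).2⟩
  have hE : #(pentagonWithChord.comap p).edgeFinset = 1089 * m ^ 2 := by
    have h := two_mul_card_edgeFinset_comap pentagonWithChord p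
    simp only [sum_mul_sum_adj_pentagonWithChord, hp] at h
    simp only [Matrix.cons_val_zero, Matrix.cons_val_one, Matrix.cons_val, mul_eq_mul_left_iff,
      OfNat.ofNat_ne_zero, or_false] at h
    rw [h]
    ring
  refine ⟨pentagonWithChord.comap p, (pentagonWithChord_colorable.comap p).cliqueFree (by norm_num),
    exists_isNClique_comap hsurj pentagonWithChord_isNClique, ?_, ?_⟩
  · rw [← coe_edgeFinset, Set.ncard_coe_finset, hE]
    exact (Nat.div_eq_of_eq_mul_left (by norm_num) (by ring)).symm
  · rw [satCount_eq_ncard_edgeSet, satGraph_comap_pentagonWithChord hsurj, ← coe_edgeFinset,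
      Set.ncard_coe_finset, card_edgeFinset_fiberCliques]
    simp only [hp, mem_insert, mem_singleton, Fin.reduceEq, or_self, not_false_eq_true,
      sum_insert, sum_singleton, Matrix.cons_val_zero, Matrix.cons_val_one, Matrix.cons_val,
      Nat.cast_add, Nat.cast_choose_two, Nat.cast_mul, Nat.cast_ofNat]
    ring
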